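/- arXiv:2108.12341 — 5 statements merged into one kernel-verified Lean document; each statement's English description precedes it below -/
import Mathlib

section
/- Consider the microgrid incremental pH model. Let ũ : ℝ → ℝ^{nG} and let x̃ : ℝ → ℝⁿ be differentiable with x̃'(t) = (J − R̃(x̃(t)))·Q·x̃(t) + g·ũ(t) for all t, and set ỹ(t) = gᵀQx̃(t) and H(x̃) = ½x̃ᵀQx̃. Fix a time t and write q̃ for the last nN-block of x̃(t). If for every k = 1,…,nN one has q̄_k(q̃_k + q̄_k) ≠ 0 and G_k > P_k C_k² / (q̄_k (q̃_k + q̄_k)) (i.e., x̃(t) lies in the domain 𝔻), then the derivative of s ↦ H(x̃(s)) at s = t is at most ỹ(t)ᵀũ(t). -/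
open Matrix

/-- Index type of the microgrid state: generator currents, line currents, bus charges. -/
abbrev BIdx (nG nE nN : ℕ) := Fin nG ⊕ (Fin nE ⊕ Fin nN)

/-- The input matrix `g = [I; 0; 0]`. -/
noncomputable def gMat (nG nE nN : ℕ) : Matrix (BIdx nG nE nN) (Fin nG) ℝ :=
  Matrix.of fun i j =>
    match i with
    | Sum.inl i' => if i' = j then (1 : ℝ) else 0
    | Sum.inr _ => 0

/-- Block-diagonal matrix with three diagonal blocks. -/
noncomputable def bd3 {nG nE nN : ℕ} (A : Matrix (Fin nG) (Fin nG) ℝ)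
    (B : Matrix (Fin nE) (Fin nE) ℝ) (D : Matrix (Fin nN) (Fin nN) ℝ) :
    Matrix (BIdx nG nE nN) (BIdx nG nE nN) ℝ :=
  Matrix.fromBlocks A 0 0 (Matrix.fromBlocks B 0 0 D)

/-- `G_P(q̃) = diag (P_k C_k² / (q̄_k (q̃_k + q̄_k)))`. -/
noncomputable def GPm {nN : ℕ} (P cD qbar : Fin nN → ℝ) (qt : Fin nN → ℝ) :
    Matrix (Fin nN) (Fin nN) ℝ :=
  Matrix.diagonal fun k => P k * (cD k) ^ 2 / (qbar k * (qt k + qbar k))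

/-- The state-dependent dissipation matrix
`R̃(z̃) = blockdiag(R_G + R_D, R_E, G − G_P(q̃))` of the incremental microgrid model. -/
noncomputable def Rtil {nG nE nN : ℕ} (rG rD : Fin nG → ℝ) (rE : Fin nE → ℝ)
    (gD cD P qbar : Fin nN → ℝ) (z : BIdx nG nE nN → ℝ) :
    Matrix (BIdx nG nE nN) (BIdx nG nE nN) ℝ :=
  bd3 (Matrix.diagonal fun i => rG i + rD i) (Matrix.diagonal rE)
    (Matrix.diagonal gD - GPm P cD qbar fun k => z (Sum.inr (Sum.inr k)))

/-!
The storage function `H = ½ x̃ᵀQx̃` of a port-Hamiltonian system `x̃' = (J − R)Qx̃ + gũ` with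
`Q` symmetric and `J` skew-symmetric has derivative `ỹᵀũ − (Qx̃)ᵀR(Qx̃)` along trajectories,
so it is passive wherever `R` is positive semidefinite. For the microgrid, `R̃(x̃)` is diagonal
with entries `R_G + R_D`, `R_E` and `G_k − P_k C_k² / (q̄_k (q̃_k + q̄_k))`, and the domain `𝔻`
is exactly where the last ones are positive.
-/

section PortHamiltonian

variable {ι κ : Type*} [Fintype ι] [Fintype κ]

theorem dotProduct_mulVec_self_eq_zero_of_transpose_eq_neg {J : Matrix ι ι ℝ} (hJ : Jᵀ = -J)
    (w : ι → ℝ) : w ⬝ᵥ (J *ᵥ w) = 0 := by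
  have h : w ⬝ᵥ (J *ᵥ w) = (Jᵀ *ᵥ w) ⬝ᵥ w := by rw [dotProduct_mulVec, ← mulVec_transpose]
  rw [hJ, neg_mulVec, neg_dotProduct, dotProduct_comm (J *ᵥ w)] at h
  linarith

theorem hasDerivAt_dotProduct_mulVec_self {Q : Matrix ι ι ℝ} {x : ℝ → ι → ℝ} {v : ι → ℝ}
    {t : ℝ} (hx : HasDerivAt x v t) :
    HasDerivAt (fun s => x s ⬝ᵥ (Q *ᵥ x s)) (v ⬝ᵥ (Q *ᵥ x t) + x t ⬝ᵥ (Q *ᵥ v)) t := by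
  have hxi : ∀ i, HasDerivAt (fun s => x s i) (v i) t := hasDerivAt_pi.mp hx
  simp only [dotProduct, mulVec, ← Finset.sum_add_distrib]
  exact HasDerivAt.fun_sum fun i _ =>
    (hxi i).mul (HasDerivAt.fun_sum fun j _ => (hxi j).const_mul (Q i j))

theorem hasDerivAt_half_dotProduct_mulVec_self {Q : Matrix ι ι ℝ} (hQ : Q.IsSymm)
    {x : ℝ → ι → ℝ} {v : ι → ℝ} {t : ℝ} (hx : HasDerivAt x v t) :
    HasDerivAt (fun s => (1 / 2 : ℝ) * (x s ⬝ᵥ (Q *ᵥ x s))) ((Q *ᵥ x t) ⬝ᵥ v) t := by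
  refine ((hasDerivAt_dotProduct_mulVec_self (Q := Q) hx).const_mul (1 / 2 : ℝ)).congr_deriv ?_
  rw [dotProduct_mulVec (x t) Q v, ← mulVec_transpose, hQ.eq, dotProduct_comm v]
  ring

theorem deriv_storage_le_supply {Q J R : Matrix ι ι ℝ} (g : Matrix ι κ ℝ) (hQ : Q.IsSymm)
    (hJ : Jᵀ = -J) (hR : R.PosSemidef) {x : ℝ → ι → ℝ} (u : κ → ℝ) {t : ℝ}
    (hx : HasDerivAt x ((J - R) *ᵥ (Q *ᵥ x t) + g *ᵥ u) t) :
    deriv (fun s => (1 / 2 : ℝ) * (x s ⬝ᵥ (Q *ᵥ x s))) t ≤ (gᵀ *ᵥ (Q *ᵥ x t)) ⬝ᵥ u := by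
  set w := Q *ᵥ x t
  have hdissipation : 0 ≤ w ⬝ᵥ (R *ᵥ w) := by
    simpa only [star_trivial] using hR.dotProduct_mulVec_nonneg w
  have hsupply : w ⬝ᵥ (g *ᵥ u) = (gᵀ *ᵥ w) ⬝ᵥ u := by
    rw [dotProduct_mulVec, ← mulVec_transpose]
  rw [(hasDerivAt_half_dotProduct_mulVec_self hQ hx).deriv, dotProduct_add, sub_mulVec,
    dotProduct_sub, dotProduct_mulVec_self_eq_zero_of_transpose_eq_neg hJ, hsupply]
  linarith

end PortHamiltonian

theorem Rtil_eq_diagonal {nG nE nN : ℕ} (rG rD : Fin nG → ℝ) (rE : Fin nE → ℝ)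
    (gD cD P qbar : Fin nN → ℝ) (z : BIdx nG nE nN → ℝ) :
    Rtil rG rD rE gD cD P qbar z = diagonal (Sum.elim (fun i => rG i + rD i) (Sum.elim rE
      fun k => gD k - P k * cD k ^ 2 / (qbar k * (z (Sum.inr (Sum.inr k)) + qbar k)))) := by
  rw [Rtil, bd3, GPm, diagonal_sub, fromBlocks_diagonal, fromBlocks_diagonal]

theorem Rtil_posSemidef {nG nE nN : ℕ} {rG rD : Fin nG → ℝ} {rE : Fin nE → ℝ}
    {gD cD P qbar : Fin nN → ℝ} {z : BIdx nG nE nN → ℝ} (hrG : ∀ i, 0 ≤ rG i)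
    (hrD : ∀ i, 0 ≤ rD i) (hrE : ∀ j, 0 ≤ rE j)
    (hz : ∀ k, P k * cD k ^ 2 / (qbar k * (z (Sum.inr (Sum.inr k)) + qbar k)) ≤ gD k) :
    (Rtil rG rD rE gD cD P qbar z).PosSemidef := by
  rw [Rtil_eq_diagonal, posSemidef_diagonal_iff]
  rintro (i | j | k)
  · exact add_nonneg (hrG i) (hrD i)
  · exact hrE j
  · exact sub_nonneg.mpr (hz k)

theorem incremental_passivity_general
    (nG nE nN : ℕ)
    (rG rD : Fin nG → ℝ) (rE : Fin nE → ℝ) (gD cD : Fin nN → ℝ)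
    (hrG : ∀ i, 0 < rG i) (hrD : ∀ i, 0 < rD i) (hrE : ∀ j, 0 < rE j)
    (Q : Matrix (BIdx nG nE nN) (BIdx nG nE nN) ℝ) (hQsymm : Q.IsSymm)
    (J : Matrix (BIdx nG nE nN) (BIdx nG nE nN) ℝ) (hJ : Jᵀ = -J)
    (P qbar : Fin nN → ℝ)
    (ut : ℝ → (Fin nG → ℝ)) (xt : ℝ → (BIdx nG nE nN → ℝ))
    (hxdiff : ∀ s : ℝ, HasDerivAt xt
      ((J - Rtil rG rD rE gD cD P qbar (xt s)) *ᵥ (Q *ᵥ xt s) + gMat nG nE nN *ᵥ ut s) s)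
    (t : ℝ)
    (hdom : ∀ k : Fin nN,
      qbar k * (xt t (Sum.inr (Sum.inr k)) + qbar k) ≠ 0 ∧
      P k * (cD k) ^ 2 / (qbar k * (xt t (Sum.inr (Sum.inr k)) + qbar k)) < gD k) :
    deriv (fun s => (1 / 2 : ℝ) * ((xt s) ⬝ᵥ (Q *ᵥ xt s))) t ≤
      ((gMat nG nE nN)ᵀ *ᵥ (Q *ᵥ xt t)) ⬝ᵥ ut t :=
  deriv_storage_le_supply _ hQsymm hJ
    (Rtil_posSemidef (fun i => (hrG i).le) (fun i => (hrD i).le) (fun j => (hrE j).le)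
      fun k => (hdom k).2.le)
    _ (hxdiff t)

/-- **Proposition 1.** Passivity of the incremental microgrid pH model on the
domain `𝔻`: at any time `t` where the state lies in `𝔻`, the derivative of the storage
function `H(x̃(s)) = ½ x̃(s)ᵀQx̃(s)` is at most `ỹ(t)ᵀũ(t)`. -/
theorem incremental_passivity
    (nG nE nN : ℕ) (hnG : 0 < nG) (hnE : 0 < nE) (hnN : 0 < nN)
    (rG rD : Fin nG → ℝ) (rE : Fin nE → ℝ) (gD cD : Fin nN → ℝ)
    (hrG : ∀ i, 0 < rG i) (hrD : ∀ i, 0 < rD i) (hrE : ∀ j, 0 < rE j)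
    (hcD : ∀ k, 0 < cD k) (hgD : ∀ k, 0 ≤ gD k)
    (Q : Matrix (BIdx nG nE nN) (BIdx nG nE nN) ℝ) (hQsymm : Q.IsSymm) (hQpd : Q.PosDef)
    (J : Matrix (BIdx nG nE nN) (BIdx nG nE nN) ℝ) (hJ : Jᵀ = -J)
    (P qbar : Fin nN → ℝ) (hqbar : ∀ k, qbar k ≠ 0)
    (ut : ℝ → (Fin nG → ℝ)) (xt : ℝ → (BIdx nG nE nN → ℝ))
    (hxdiff : ∀ s : ℝ, HasDerivAt xt
      ((J - Rtil rG rD rE gD cD P qbar (xt s)) *ᵥ (Q *ᵥ xt s) + gMat nG nE nN *ᵥ ut s) s)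
    (t : ℝ)
    (hdom : ∀ k : Fin nN,
      qbar k * (xt t (Sum.inr (Sum.inr k)) + qbar k) ≠ 0 ∧
      P k * (cD k) ^ 2 / (qbar k * (xt t (Sum.inr (Sum.inr k)) + qbar k)) < gD k) :
    deriv (fun s => (1 / 2 : ℝ) * ((xt s) ⬝ᵥ (Q *ᵥ xt s))) t ≤
      ((gMat nG nE nN)ᵀ *ᵥ (Q *ᵥ xt t)) ⬝ᵥ ut t :=
  incremental_passivity_general nG nE nN rG rD rE gD cD hrG hrD hrE Q hQsymm J hJ P qbar ut xt
    hxdiff t hdom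
end

section
/- Let m be a positive integer, a : Fin m → Fin m → ℝ symmetric nonnegative weights with zero diagonal whose Laplacian is 𝓛 (𝓛 i i = Σ_j a i j, 𝓛 i j = −a i j for i ≠ j), and suppose the simple graph on Fin m with i ~ j iff a i j > 0 is connected. Let k_I be an m×m diagonal matrix with positive diagonal entries, let α_i > 0 and β_i ∈ ℝ for each i, let ȳ ∈ ℝ^m, and define ū_c ∈ ℝ^m by (ū_c)_i = 2α_i ȳ_i + β_i. If k_I·𝓛·ū_c = 0, then there exists λ_opt ∈ ℝ with 2α_i ȳ_i + β_i = λ_opt for all i; consequently ȳ is the unique global minimizer of Σ_i (α_i I_i² + β_i I_i + γ_i) over {I ∈ ℝ^m : Σ_i I_i = Σ_i ȳ_i} for any γ ∈ ℝ^m. -/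
open Matrix BigOperators

/-- **first half of Proposition 3.** If the communication graph is connected
and at equilibrium `k_I 𝓛 ū_c = 0` with `(ū_c)_i = 2α_i ȳ_i + β_i`, then the incremental
costs agree on a common value `λ_opt`, and consequently `ȳ` is the unique global minimizer
of the dispatch cost over all currents with the same total. -/
theorem equilibrium_is_optimal_dispatch
    (m : ℕ) (hm : 0 < m)
    (a : Fin m → Fin m → ℝ)
    (hsymm : ∀ i j, a i j = a j i) (hnn : ∀ i j, 0 ≤ a i j) (hdiag : ∀ i, a i i = 0)
    (L : Matrix (Fin m) (Fin m) ℝ)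
    (hL : ∀ i j, L i j = if i = j then ∑ k, a i k else -a i j)
    (G : SimpleGraph (Fin m)) (hG : ∀ i j, G.Adj i j ↔ i ≠ j ∧ 0 < a i j)
    (hconn : G.Connected)
    (kd : Fin m → ℝ) (hkd : ∀ i, 0 < kd i)
    (α β : Fin m → ℝ) (hα : ∀ i, 0 < α i)
    (ybar : Fin m → ℝ)
    (heq : (Matrix.diagonal kd * L) *ᵥ (fun i => 2 * α i * ybar i + β i) = 0) :
    (∃ lopt : ℝ, ∀ i, 2 * α i * ybar i + β i = lopt) ∧
    (∀ γ : Fin m → ℝ, ∀ I : Fin m → ℝ, ∑ i, I i = ∑ i, ybar i → I ≠ ybar →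
      ∑ i, (α i * (ybar i) ^ 2 + β i * ybar i + γ i) <
        ∑ i, (α i * (I i) ^ 2 + β i * I i + γ i)) := by
  classical
  set u : Fin m → ℝ := fun i => 2 * α i * ybar i + β i with hudef
  -- L *ᵥ u = 0
  have hLu : ∀ i, (L *ᵥ u) i = 0 := by
    intro i
    have h := congrFun heq i
    rw [← Matrix.mulVec_mulVec] at h
    have h2 : (Matrix.diagonal kd *ᵥ (L *ᵥ u)) i = kd i * (L *ᵥ u) i := by
      simp [Matrix.mulVec, dotProduct, Matrix.diagonal_apply, Finset.sum_ite_eq]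
    rw [h2] at h
    have := (hkd i).ne'
    simp at h
    rcases h with h | h
    · exact absurd h this
    · exact h
  -- explicit form of L *ᵥ u
  have hLform : ∀ i, (L *ᵥ u) i = ∑ j, a i j * (u i - u j) := by
    intro i
    simp only [Matrix.mulVec, dotProduct, hL]
    have h1 : ∀ j, (if i = j then ∑ k, a i k else -a i j) * u j
        = (if i = j then (∑ k, a i k) * u j else 0) - a i j * u j := by
      intro j
      by_cases h : i = j
      · subst h; simp [hdiag i]
      · simp [h]
    rw [Finset.sum_congr rfl (fun j _ => h1 j), Finset.sum_sub_distrib,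
      Finset.sum_ite_eq Finset.univ i (fun j => (∑ k, a i k) * u j)]
    simp only [Finset.mem_univ, if_true, mul_sub, Finset.sum_sub_distrib,
      ← Finset.sum_mul]
  -- quadratic form vanishes
  have hS1 : ∑ i, ∑ j, a i j * (u i * (u i - u j)) = 0 := by
    have : ∀ i, ∑ j, a i j * (u i * (u i - u j)) = u i * (L *ᵥ u) i := by
      intro i
      rw [hLform i, Finset.mul_sum]
      exact Finset.sum_congr rfl fun j _ => by ring
    rw [Finset.sum_congr rfl fun i _ => this i]
    simp [hLu]
  have hS2 : ∑ i, ∑ j, a i j * (u j * (u i - u j)) = 0 := by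
    rw [Finset.sum_comm]
    have : ∀ j i, a i j * (u j * (u i - u j)) = -(a j i * (u j * (u j - u i))) := by
      intro j i; rw [hsymm i j]; ring
    calc ∑ j, ∑ i, a i j * (u j * (u i - u j))
        = ∑ j, ∑ i, -(a j i * (u j * (u j - u i))) :=
          Finset.sum_congr rfl fun j _ => Finset.sum_congr rfl fun i _ => this j i
      _ = -∑ j, ∑ i, a j i * (u j * (u j - u i)) := by simp [Finset.sum_neg_distrib]
      _ = 0 := by rw [hS1]; ring
  have hQ : ∑ i, ∑ j, a i j * (u i - u j) ^ 2 = 0 := by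
    have : ∀ i j : Fin m, a i j * (u i - u j) ^ 2
        = a i j * (u i * (u i - u j)) - a i j * (u j * (u i - u j)) := by
      intro i j; ring
    calc ∑ i, ∑ j, a i j * (u i - u j) ^ 2
        = ∑ i, ∑ j, (a i j * (u i * (u i - u j)) - a i j * (u j * (u i - u j))) :=
          Finset.sum_congr rfl fun i _ => Finset.sum_congr rfl fun j _ => this i j
      _ = 0 := by simp [Finset.sum_sub_distrib, hS1, hS2]
  -- each term vanishes
  have hterm : ∀ i j, a i j * (u i - u j) ^ 2 = 0 := by
    have hnn2 : ∀ i ∈ Finset.univ, (0:ℝ) ≤ ∑ j, a i j * (u i - u j) ^ 2 := by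
      intro i _
      exact Finset.sum_nonneg fun j _ => mul_nonneg (hnn i j) (sq_nonneg _)
    intro i j
    have h1 := (Finset.sum_eq_zero_iff_of_nonneg hnn2).mp hQ i (Finset.mem_univ i)
    have hnn3 : ∀ j ∈ Finset.univ, (0:ℝ) ≤ a i j * (u i - u j) ^ 2 :=
      fun j _ => mul_nonneg (hnn i j) (sq_nonneg _)
    exact (Finset.sum_eq_zero_iff_of_nonneg hnn3).mp h1 j (Finset.mem_univ j)
  have hadj : ∀ i j, G.Adj i j → u i = u j := by
    intro i j hij
    obtain ⟨-, hpos⟩ := (hG i j).mp hij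
    have := hterm i j
    have h2 : (u i - u j) ^ 2 = 0 := by
      rcases mul_eq_zero.mp this with h | h
      · exact absurd h hpos.ne'
      · exact h
    have := pow_eq_zero_iff (n := 2) (by norm_num) |>.mp h2
    linarith [sub_eq_zero.mp this]
  -- constancy via connectivity
  have hwalk : ∀ {x y : Fin m}, G.Walk x y → u x = u y := by
    intro x y w
    induction w with
    | nil => rfl
    | cons h _ ih => exact (hadj _ _ h).trans ih
  set i0 : Fin m := ⟨0, hm⟩
  set lopt : ℝ := u i0 with hlopt
  have hl : ∀ i, u i = lopt := by
    intro i
    obtain ⟨w⟩ := hconn.preconnected i i0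
    exact hwalk w
  constructor
  · exact ⟨lopt, hl⟩
  · intro γ I hsum hne
    have hpt : ∀ i, α i * (I i) ^ 2 + β i * I i + γ i
        = (α i * (ybar i) ^ 2 + β i * ybar i + γ i) + α i * (I i - ybar i) ^ 2
          + lopt * (I i - ybar i) := by
      intro i
      have h := hl i
      simp only [hudef] at h
      linear_combination (I i - ybar i) * h
    have hsum2 : ∑ i, (α i * (I i) ^ 2 + β i * I i + γ i)
        = ∑ i, (α i * (ybar i) ^ 2 + β i * ybar i + γ i)
          + ∑ i, α i * (I i - ybar i) ^ 2 + lopt * (∑ i, I i - ∑ i, ybar i) := by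
      rw [Finset.sum_congr rfl fun i _ => hpt i]
      rw [Finset.sum_add_distrib, Finset.sum_add_distrib, ← Finset.mul_sum,
        Finset.sum_sub_distrib]
    rw [hsum2, hsum, sub_self, mul_zero, add_zero]
    have hpos : 0 < ∑ i, α i * (I i - ybar i) ^ 2 := by
      obtain ⟨i, hi⟩ := Function.ne_iff.mp hne
      refine Finset.sum_pos' (fun j _ => mul_nonneg (hα j).le (sq_nonneg _)) ⟨i, Finset.mem_univ i, ?_⟩
      exact mul_pos (hα i) (by have := sub_ne_zero.mpr hi; positivity)
    linarith
end

section
/- Let m be a positive integer, 𝓛 a symmetric m×m real matrix with 𝓛·𝟙 = 0 (𝟙 the all-ones vector), w an m×m diagonal matrix with positive diagonal entries w_i, R_D an m×m diagonal real matrix, k_P ∈ ℝ, β ∈ ℝ^m, and V_nom ∈ ℝ. Let ȳ, x̄_c ∈ ℝ^m be arbitrary and set r = −R_D + k_P·w⁻¹·𝓛·w⁻¹, b = −k_P·w⁻¹·𝓛·β, ȳ_c = −𝓛·x̄_c, ū = −r·ȳ − w⁻¹·ȳ_c + b, and V̄ = V_nom·𝟙 − R_D·ȳ + ū. Then Σ_i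 w_i V̄_i = V_nom · Σ_i w_i, i.e., the w-weighted average of the equilibrium voltages V̄ equals the nominal voltage V_nom. -/
open Matrix BigOperators

/-- **second half of Proposition 3.** With the gain choices
`r = −R_D + k_P w⁻¹𝓛w⁻¹`, `b = −k_P w⁻¹𝓛β`, the `w`-weighted average of the equilibrium
voltages `V̄ = V_nom𝟙 − R_D ȳ + ū` (with `ū = −rȳ − w⁻¹ȳ_c + b`, `ȳ_c = −𝓛x̄_c`) equals
the nominal voltage. -/
theorem weighted_average_voltage
    (m : ℕ) (hm : 0 < m)
    (L : Matrix (Fin m) (Fin m) ℝ) (hLsymm : L.IsSymm)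
    (hL1 : L *ᵥ (fun _ => (1 : ℝ)) = 0)
    (wd : Fin m → ℝ) (hwd : ∀ i, 0 < wd i)
    (rD : Fin m → ℝ) (kP : ℝ) (β : Fin m → ℝ) (Vnom : ℝ)
    (ybar xbarc : Fin m → ℝ) :
    let w : Matrix (Fin m) (Fin m) ℝ := Matrix.diagonal wd
    let RD : Matrix (Fin m) (Fin m) ℝ := Matrix.diagonal rD
    let r : Matrix (Fin m) (Fin m) ℝ := -RD + kP • (w⁻¹ * L * w⁻¹)
    let b : Fin m → ℝ := -(kP • (w⁻¹ *ᵥ (L *ᵥ β)))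
    let ybarc : Fin m → ℝ := -(L *ᵥ xbarc)
    let ubar : Fin m → ℝ := -(r *ᵥ ybar) - w⁻¹ *ᵥ ybarc + b
    let Vbar : Fin m → ℝ := (fun _ => Vnom) - RD *ᵥ ybar + ubar
    ∑ i, wd i * Vbar i = Vnom * ∑ i, wd i := by
  intro w RD r b ybarc ubar Vbar
  have hwinv : w⁻¹ = Matrix.diagonal (fun i => (wd i)⁻¹) := by
    apply Matrix.inv_eq_right_inv
    rw [show w = Matrix.diagonal wd from rfl, Matrix.diagonal_mul_diagonal]
    rw [show (1 : Matrix (Fin m) (Fin m) ℝ) = Matrix.diagonal (fun _ => (1:ℝ)) by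
      simp [Matrix.diagonal_one]]
    exact congrArg Matrix.diagonal (funext fun i => mul_inv_cancel₀ (hwd i).ne')
  -- key vanishing lemma
  have hsumL : ∀ v : Fin m → ℝ, ∑ i, (L *ᵥ v) i = 0 := by
    intro v
    have h1 : ∑ i, (L *ᵥ v) i = (fun _ => (1:ℝ)) ⬝ᵥ (L *ᵥ v) := by
      simp [dotProduct]
    rw [h1, Matrix.dotProduct_mulVec]
    have h2 : (fun _ => (1:ℝ)) ᵥ* L = 0 := by
      rw [← Matrix.mulVec_transpose, hLsymm.eq]
      exact hL1
    rw [h2, zero_dotProduct]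
  have hz : ∀ v : Fin m → ℝ, ∑ i, wd i * (w⁻¹ *ᵥ (L *ᵥ v)) i = 0 := by
    intro v
    have : ∀ i, wd i * (w⁻¹ *ᵥ (L *ᵥ v)) i = (L *ᵥ v) i := by
      intro i
      rw [hwinv, Matrix.mulVec_diagonal, ← mul_assoc, mul_inv_cancel₀ (hwd i).ne', one_mul]
    rw [Finset.sum_congr rfl (fun i _ => this i), hsumL]
  have hstep : ∀ i, wd i * Vbar i =
      wd i * Vnom - kP * (wd i * (w⁻¹ *ᵥ (L *ᵥ (w⁻¹ *ᵥ ybar))) i)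
        + wd i * (w⁻¹ *ᵥ (L *ᵥ xbarc)) i
        - kP * (wd i * (w⁻¹ *ᵥ (L *ᵥ β)) i) := by
    intro i
    show wd i * Vbar i = _
    have hr : r *ᵥ ybar = -(RD *ᵥ ybar) + kP • (w⁻¹ *ᵥ (L *ᵥ (w⁻¹ *ᵥ ybar))) := by
      show (-RD + kP • (w⁻¹ * L * w⁻¹)) *ᵥ ybar = _
      rw [Matrix.add_mulVec, Matrix.neg_mulVec, Matrix.smul_mulVec,
        Matrix.mul_assoc, ← Matrix.mulVec_mulVec, ← Matrix.mulVec_mulVec]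
    have hu : ubar i = (RD *ᵥ ybar) i - kP * (w⁻¹ *ᵥ (L *ᵥ (w⁻¹ *ᵥ ybar))) i
        + (w⁻¹ *ᵥ (L *ᵥ xbarc)) i - kP * (w⁻¹ *ᵥ (L *ᵥ β)) i := by
      show (-(r *ᵥ ybar) - w⁻¹ *ᵥ ybarc + b) i = _
      rw [hr]
      show -(-(RD *ᵥ ybar) i + kP * (w⁻¹ *ᵥ (L *ᵥ (w⁻¹ *ᵥ ybar))) i)
          - (w⁻¹ *ᵥ -(L *ᵥ xbarc)) i + -(kP * (w⁻¹ *ᵥ (L *ᵥ β)) i) = _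
      rw [Matrix.mulVec_neg]
      simp only [Pi.neg_apply]
      ring
    show wd i * (Vnom - (RD *ᵥ ybar) i + ubar i) = _
    rw [hu]
    ring
  rw [Finset.sum_congr rfl (fun i _ => hstep i)]
  rw [Finset.sum_sub_distrib, Finset.sum_add_distrib, Finset.sum_sub_distrib,
    ← Finset.mul_sum, ← Finset.mul_sum, hz, hz, hz]
  simp [Finset.mul_sum, mul_comm]
end

section
/- Consider the microgrid model: with n = nG + nE + nN, let R₀ = blockdiag(R_G + R_D, R_E, G), F = J − R₀ with J skew-symmetric, g the n×nG block matrix [I; 0; 0], E ∈ ℝⁿ, and for z ∈ ℝⁿ with last block q having all entries nonzero let d(z) ∈ ℝⁿ be the vector whose first nG + nE entries are zero and whose k-th last-block entry is −P_k C_k / q_k. Let u : ℝ → ℝ^{nG} and let x : ℝ → ℝⁿ be differentiable with x'(t) = F·Q·x(t) + d(x(t)) + g·u(t) + E for all t, and let x̄ ∈ ℝⁿ and ū ∈ ℝ^{nG} satisfy 0 = F·Q·x̄ + d(x̄) + g·ū + E. Assume the last-block entries q_k(t) of x(t) and q̄_k of x̄ are nonzero for all k and t. Then x̃ = x − x̄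 satisfies x̃'(t) = (J − R̃(x̃(t)))·Q·x̃(t) + g·(u(t) − ū) for all t, where R̃(z̃) = blockdiag(R_G + R_D, R_E, G − G_P(q̃)) and G_P(q̃) is the diagonal matrix with k-th entry P_k C_k² / (q̄_k (q̃_k + q̄_k)). -/
open Matrix

/-- The constant-power-load drift: zero on the first two blocks, `−P_k C_k / q_k` on the
charge block. -/
noncomputable def cplDrift {nG nE nN : ℕ} (P cD : Fin nN → ℝ) (z : BIdx nG nE nN → ℝ) :
    BIdx nG nE nN → ℝ :=
  fun i =>
    match i with
    | Sum.inl _ => 0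
    | Sum.inr (Sum.inl _) => 0
    | Sum.inr (Sum.inr k) => -(P k * cD k / z (Sum.inr (Sum.inr k)))

/-!
Subtracting the equilibrium equation from the dynamics cancels `E` and splits off `g (u - ū)`;
the linear part `F Q` passes unchanged to the increment `x̃ = x - x̄`. The only nonlinearity,
the constant-power drift `-P_k C_k / q_k`, has increment
`P_k C_k (q_k - q̄_k) / (q̄_k q_k) = G_P(q̃)_k · (q_k - q̄_k) / C_k`, which is `G_P(q̃)` applied to
the charge block of `Q x̃`. Absorbing it into the dissipation turns `R₀` into
`R̃ = R₀ - blockdiag(0, 0, G_P(q̃))`.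
-/

theorem bd3_diagonal {nG nE nN : ℕ} (a : Fin nG → ℝ) (b : Fin nE → ℝ) (c : Fin nN → ℝ) :
    bd3 (diagonal a) (diagonal b) (diagonal c) = diagonal (Sum.elim a (Sum.elim b c)) := by
  simp only [bd3, fromBlocks_diagonal]

theorem bd3_sub {nG nE nN : ℕ} (A A' : Matrix (Fin nG) (Fin nG) ℝ)
    (B B' : Matrix (Fin nE) (Fin nE) ℝ) (D D' : Matrix (Fin nN) (Fin nN) ℝ) :
    bd3 A B D - bd3 A' B' D' = bd3 (A - A') (B - B') (D - D') := by
  simp only [bd3, sub_eq_add_neg, fromBlocks_neg, fromBlocks_add, neg_zero, add_zero]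

theorem Rtil_eq_sub {nG nE nN : ℕ} (rG rD : Fin nG → ℝ) (rE : Fin nE → ℝ)
    (gD cD P qbar : Fin nN → ℝ) (z : BIdx nG nE nN → ℝ) :
    Rtil rG rD rE gD cD P qbar z =
      bd3 (diagonal fun i => rG i + rD i) (diagonal rE) (diagonal gD) -
        bd3 0 0 (GPm P cD qbar fun k => z (Sum.inr (Sum.inr k))) := by
  rw [Rtil, bd3_sub, sub_zero, sub_zero]

-- Written with `q - qbar + qbar` so that it matches `G_P(q̃)` at `q̃ = q - q̄`.
theorem cpl_increment {P c q qbar : ℝ} (hq : q ≠ 0) (hqbar : qbar ≠ 0) :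
    -(P * c / q) - -(P * c / qbar) =
      P * c ^ 2 / (qbar * (q - qbar + qbar)) * (c⁻¹ * (q - qbar)) := by
  rcases eq_or_ne c 0 with rfl | hc
  · simp
  · rw [sub_add_cancel]
    field_simp
    ring

theorem cplDrift_sub_cplDrift {nG nE nN : ℕ} (P c : Fin nN → ℝ) (a : Fin nG → ℝ)
    (b : Fin nE → ℝ) {x xbar : BIdx nG nE nN → ℝ}
    (hx : ∀ k, x (Sum.inr (Sum.inr k)) ≠ 0) (hxbar : ∀ k, xbar (Sum.inr (Sum.inr k)) ≠ 0) :
    cplDrift P c x - cplDrift P c xbar =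
      bd3 0 0 (GPm P c (fun k => xbar (Sum.inr (Sum.inr k)))
          fun k => (x - xbar) (Sum.inr (Sum.inr k))) *ᵥ
        (bd3 (diagonal a) (diagonal b) (diagonal fun k => (c k)⁻¹) *ᵥ (x - xbar)) := by
  rw [GPm, ← diagonal_zero, ← diagonal_zero, bd3_diagonal, bd3_diagonal]
  funext i
  rcases i with i | i | k
  · simp [cplDrift, mulVec_diagonal]
  · simp [cplDrift, mulVec_diagonal]
  · simpa [cplDrift, mulVec_diagonal] using cpl_increment (P := P k) (hx k) (hxbar k)

theorem HasDerivAt.sub_equilibrium {V : Type*} [NormedAddCommGroup V] [NormedSpace ℝ V]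
    {x : ℝ → V} {xbar v w e : V} {t : ℝ} (hx : HasDerivAt x (v + e) t) (hxbar : 0 = w + e) :
    HasDerivAt (fun s => x s - xbar) (v - w) t := by
  have he : e = -w := eq_neg_of_add_eq_zero_right hxbar.symm
  simpa [he, sub_eq_add_neg] using hx.sub_const xbar

theorem incremental_model_pH_general
    (nG nE nN : ℕ)
    (rG rD : Fin nG → ℝ) (rE : Fin nE → ℝ) (gD cD : Fin nN → ℝ) (lG : Fin nG → ℝ)
    (lE : Fin nE → ℝ)
    (J : Matrix (BIdx nG nE nN) (BIdx nG nE nN) ℝ)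
    (P : Fin nN → ℝ) (E : BIdx nG nE nN → ℝ)
    (ut : ℝ → (Fin nG → ℝ)) (xt : ℝ → (BIdx nG nE nN → ℝ))
    (xbar : BIdx nG nE nN → ℝ) (ubar : Fin nG → ℝ) :
    let Q : Matrix (BIdx nG nE nN) (BIdx nG nE nN) ℝ :=
      bd3 (Matrix.diagonal fun i => (lG i)⁻¹) (Matrix.diagonal fun j => (lE j)⁻¹)
        (Matrix.diagonal fun k => (cD k)⁻¹)
    let R0 : Matrix (BIdx nG nE nN) (BIdx nG nE nN) ℝ :=
      bd3 (Matrix.diagonal fun i => rG i + rD i) (Matrix.diagonal rE)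
        (Matrix.diagonal gD)
    let F : Matrix (BIdx nG nE nN) (BIdx nG nE nN) ℝ := J - R0
    (∀ t : ℝ, HasDerivAt xt
        (F *ᵥ (Q *ᵥ xt t) + cplDrift P cD (xt t) + gMat nG nE nN *ᵥ ut t + E) t) →
    (0 = F *ᵥ (Q *ᵥ xbar) + cplDrift P cD xbar + gMat nG nE nN *ᵥ ubar + E) →
    (∀ t : ℝ, ∀ k : Fin nN, xt t (Sum.inr (Sum.inr k)) ≠ 0) →
    (∀ k : Fin nN, xbar (Sum.inr (Sum.inr k)) ≠ 0) →
    ∀ t : ℝ, HasDerivAt (fun s => xt s - xbar)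
      ((J - Rtil rG rD rE gD cD P (fun k => xbar (Sum.inr (Sum.inr k)))
          (xt t - xbar)) *ᵥ (Q *ᵥ (xt t - xbar)) +
        gMat nG nE nN *ᵥ (ut t - ubar)) t := by
  intro Q R0 F hxt hxbar hq hqbar t
  refine (HasDerivAt.sub_equilibrium (hxt t) hxbar).congr_deriv ?_
  have hsplit : J - Rtil rG rD rE gD cD P (fun k => xbar (Sum.inr (Sum.inr k))) (xt t - xbar)
      = F + bd3 0 0 (GPm P cD (fun k => xbar (Sum.inr (Sum.inr k)))
          fun k => (xt t - xbar) (Sum.inr (Sum.inr k))) := by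
    rw [Rtil_eq_sub, sub_sub_eq_add_sub, add_sub_right_comm]
  rw [hsplit, add_mulVec, ← cplDrift_sub_cplDrift P cD _ _ (hq t) hqbar, mulVec_sub,
    mulVec_sub, mulVec_sub]
  abel

/-- The incremental model of the droop-based microgrid with ZIP loads
admits the port-Hamiltonian representation `x̃' = (J − R̃(x̃))Qx̃ + g(u − ū)` with
state-dependent dissipation matrix `R̃`. -/
theorem incremental_model_pH
    (nG nE nN : ℕ) (hnG : 0 < nG) (hnE : 0 < nE) (hnN : 0 < nN)
    (rG rD : Fin nG → ℝ) (rE : Fin nE → ℝ) (gD cD : Fin nN → ℝ) (lG : Fin nG → ℝ)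
    (lE : Fin nE → ℝ)
    (hrG : ∀ i, 0 < rG i) (hrD : ∀ i, 0 < rD i) (hrE : ∀ j, 0 < rE j)
    (hcD : ∀ k, 0 < cD k) (hgD : ∀ k, 0 ≤ gD k)
    (hlG : ∀ i, 0 < lG i) (hlE : ∀ j, 0 < lE j)
    (J : Matrix (BIdx nG nE nN) (BIdx nG nE nN) ℝ) (hJ : Jᵀ = -J)
    (P : Fin nN → ℝ) (E : BIdx nG nE nN → ℝ)
    (ut : ℝ → (Fin nG → ℝ)) (xt : ℝ → (BIdx nG nE nN → ℝ))
    (xbar : BIdx nG nE nN → ℝ) (ubar : Fin nG → ℝ) :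
    let Q : Matrix (BIdx nG nE nN) (BIdx nG nE nN) ℝ :=
      bd3 (Matrix.diagonal fun i => (lG i)⁻¹) (Matrix.diagonal fun j => (lE j)⁻¹)
        (Matrix.diagonal fun k => (cD k)⁻¹)
    let R0 : Matrix (BIdx nG nE nN) (BIdx nG nE nN) ℝ :=
      bd3 (Matrix.diagonal fun i => rG i + rD i) (Matrix.diagonal rE)
        (Matrix.diagonal gD)
    let F : Matrix (BIdx nG nE nN) (BIdx nG nE nN) ℝ := J - R0
    (∀ t : ℝ, HasDerivAt xt
        (F *ᵥ (Q *ᵥ xt t) + cplDrift P cD (xt t) + gMat nG nE nN *ᵥ ut t + E) t) →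
    (0 = F *ᵥ (Q *ᵥ xbar) + cplDrift P cD xbar + gMat nG nE nN *ᵥ ubar + E) →
    (∀ t : ℝ, ∀ k : Fin nN, xt t (Sum.inr (Sum.inr k)) ≠ 0) →
    (∀ k : Fin nN, xbar (Sum.inr (Sum.inr k)) ≠ 0) →
    ∀ t : ℝ, HasDerivAt (fun s => xt s - xbar)
      ((J - Rtil rG rD rE gD cD P (fun k => xbar (Sum.inr (Sum.inr k)))
          (xt t - xbar)) *ᵥ (Q *ᵥ (xt t - xbar)) +
        gMat nG nE nN *ᵥ (ut t - ubar)) t :=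
  incremental_model_pH_general nG nE nN rG rD rE gD cD lG lE J P E ut xt xbar ubar
end

section
/- Consider the closed-loop system of the microgrid incremental pH model with no constant-power loads, i.e., P = 0, so that R̃(z̃) = blockdiag(R_G + R_D, R_E, G) is constant in z̃. Let x̃ : [0,∞) → ℝⁿ and x̃_c : [0,∞) → ℝ^{nG} be differentiable and satisfy x̃'(t) = (J − R̃)·Q·x̃(t) + g·ũ(t) and x̃_c'(t) = −k_I·𝓛·ũ_c(t), where ỹ = gᵀQx̃, ỹ_c = −𝓛x̃_c, ũ = −rỹ − w⁻¹ỹ_c, ũ_c = (w⁻¹)ᵀỹ, with 𝓛 symmetric and w invertible. If the symmetric part of R_D + r is positive semidefinite, then for every initial condition (no restriction to any domain) the total storage H_t(t) = ½x̃(ت)ᵀQx̃(t) + ½x̃_c(t)ᵀk_I⁻¹x̃_c(t) is nonincreasing on [0,∞) and every trajectory remains bounded. -/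
open Matrix

/-!
Write `z = Q x̃` and `y = gᵀ z`. Since `J` is skew it does no work, so along the plant the
storage `½ x̃ᵀ Q x̃` changes at rate `-zᵀ R̃ z + yᵀ ũ`, while the controller storage
`½ x̃_cᵀ k_I⁻¹ x̃_c` changes at rate `-yᵀ w⁻¹ 𝓛 x̃_c`, which cancels the `-w⁻¹ ỹ_c` part of `yᵀ ũ`.
What remains is `-zᵀ R̃ z - yᵀ r y ≤ -yᵀ (R_D + r) y ≤ 0`, the first step because the
generator block of `R̃` contains `R_D` and the other blocks are nonnegative. With `P = 0` the
matrix `R̃` is constant, so this holds on the whole state space. Hence the total storage is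
nonincreasing, and since `Q` and `k_I⁻¹` are positive definite, its sublevel sets are bounded.
-/

namespace Matrix

variable {ι κ : Type*} [Fintype ι]

theorem _root_.HasDerivAt.dotProduct {f g : ℝ → ι → ℝ} {f' g' : ι → ℝ} {t : ℝ}
    (hf : HasDerivAt f f' t) (hg : HasDerivAt g g' t) :
    HasDerivAt (fun s => f s ⬝ᵥ g s) (f' ⬝ᵥ g t + f t ⬝ᵥ g') t := by
  rw [show f' ⬝ᵥ g t + f t ⬝ᵥ g' = ∑ i, (f' i * g t i + f t i * g' i) from
    Finset.sum_add_distrib.symm]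
  exact HasDerivAt.fun_sum fun i _ => (hasDerivAt_pi.1 hf i).mul (hasDerivAt_pi.1 hg i)

theorem _root_.HasDerivAt.matrix_mulVec (A : Matrix κ ι ℝ) {f : ℝ → ι → ℝ} {f' : ι → ℝ}
    {t : ℝ} (hf : HasDerivAt f f' t) : HasDerivAt (fun s => A *ᵥ f s) (A *ᵥ f') t :=
  hasDerivAt_pi.2 fun i => HasDerivAt.fun_sum fun j _ => (hasDerivAt_pi.1 hf j).const_mul (A i j)

theorem IsSymm.hasDerivAt_half_dotProduct_mulVec {A : Matrix ι ι ℝ} (hA : A.IsSymm)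
    {f : ℝ → ι → ℝ} {f' : ι → ℝ} {t : ℝ} (hf : HasDerivAt f f' t) :
    HasDerivAt (fun s => (1 / 2 : ℝ) * (f s ⬝ᵥ (A *ᵥ f s))) (f' ⬝ᵥ (A *ᵥ f t)) t := by
  have hswap : f t ⬝ᵥ (A *ᵥ f') = f' ⬝ᵥ (A *ᵥ f t) := by
    rw [dotProduct_mulVec, ← mulVec_transpose, hA.eq, dotProduct_comm]
  have h := (hf.dotProduct (hf.matrix_mulVec A)).const_mul (1 / 2 : ℝ)
  rwa [hswap, ← two_mul, ← mul_assoc, one_div_mul_cancel two_ne_zero, one_mul] at h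

theorem PosDef.exists_pos_mul_sq_norm_le {A : Matrix ι ι ℝ} (hA : A.PosDef) :
    ∃ m : ℝ, 0 < m ∧ ∀ v : ι → ℝ, m * ‖v‖ ^ 2 ≤ v ⬝ᵥ (A *ᵥ v) := by
  rcases isEmpty_or_nonempty ι with hι | hι
  · exact ⟨1, one_pos, fun v => by simp [Subsingleton.elim v 0]⟩
  have hpos : ∀ v : ι → ℝ, v ≠ 0 → 0 < v ⬝ᵥ (A *ᵥ v) := fun v hv => by
    simpa using hA.dotProduct_mulVec_pos hv
  have hcont : Continuous fun v : ι → ℝ => v ⬝ᵥ (A *ᵥ v) := by fun_prop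
  have hne : (Metric.sphere (0 : ι → ℝ) 1).Nonempty :=
    ⟨fun _ => 1, by simp [pi_norm_const]⟩
  -- the minimum of the form on the unit sphere works, by homogeneity
  obtain ⟨u₀, hu₀, hmin⟩ := (isCompact_sphere (0 : ι → ℝ) 1).exists_isMinOn hne
    hcont.continuousOn
  have hu₀ne : u₀ ≠ 0 := ne_zero_of_mem_unit_sphere ⟨u₀, hu₀⟩
  refine ⟨u₀ ⬝ᵥ (A *ᵥ u₀), hpos u₀ hu₀ne, fun v => ?_⟩
  rcases eq_or_ne v 0 with rfl | hv
  · simp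
  have hn : 0 < ‖v‖ := norm_pos_iff.2 hv
  have hsphere : ‖v‖⁻¹ • v ∈ Metric.sphere (0 : ι → ℝ) 1 := by
    simp [norm_smul, hn.ne']
  have hle := hmin hsphere
  simp only [Set.mem_ofPred_eq, mulVec_smul, dotProduct_smul, smul_dotProduct,
    smul_eq_mul] at hle
  calc u₀ ⬝ᵥ (A *ᵥ u₀) * ‖v‖ ^ 2 ≤ ‖v‖⁻¹ * (‖v‖⁻¹ * v ⬝ᵥ (A *ᵥ v)) * ‖v‖ ^ 2 := by gcongr
    _ = v ⬝ᵥ (A *ᵥ v) := by field_simp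

theorem PosDef.exists_norm_le_of_dotProduct_mulVec_le {A : Matrix ι ι ℝ} (hA : A.PosDef)
    (b : ℝ) : ∃ M : ℝ, ∀ v : ι → ℝ, v ⬝ᵥ (A *ᵥ v) ≤ b → ‖v‖ ≤ M := by
  obtain ⟨m, hm, hle⟩ := hA.exists_pos_mul_sq_norm_le
  refine ⟨√(b / m), fun v hv => Real.le_sqrt_of_sq_le ?_⟩
  rw [le_div_iff₀ hm, mul_comm]
  exact (hle v).trans hv

theorem dotProduct_mulVec_self_eq_zero_of_transpose_eq_neg {J : Matrix ι ι ℝ} (hJ : Jᵀ = -J)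
    (z : ι → ℝ) : z ⬝ᵥ (J *ᵥ z) = 0 := by
  have h := dotProduct_transpose_mulVec J z z
  rw [hJ, neg_mulVec, dotProduct_neg] at h
  linarith

theorem dotProduct_portHamiltonian_flow [Fintype κ] {J : Matrix ι ι ℝ} (hJ : Jᵀ = -J)
    (R : Matrix ι ι ℝ) (g : Matrix ι κ ℝ) (z : ι → ℝ) (u : κ → ℝ) :
    ((J - R) *ᵥ z + g *ᵥ u) ⬝ᵥ z = -((R *ᵥ z) ⬝ᵥ z) + u ⬝ᵥ (gᵀ *ᵥ z) := by
  rw [add_dotProduct, sub_mulVec, sub_dotProduct, dotProduct_comm (J *ᵥ z),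
    dotProduct_mulVec_self_eq_zero_of_transpose_eq_neg hJ, dotProduct_transpose_mulVec,
    dotProduct_comm z]
  ring

theorem neg_mul_mulVec_dotProduct_inv_mulVec [DecidableEq ι] {K L : Matrix ι ι ℝ}
    (hK : K.IsSymm) (hKdet : IsUnit K.det) (hL : L.IsSymm) (v c : ι → ℝ) :
    -((K * L) *ᵥ v) ⬝ᵥ (K⁻¹ *ᵥ c) = -(v ⬝ᵥ (L *ᵥ c)) := by
  rw [neg_dotProduct, ← mulVec_mulVec, dotProduct_comm, ← dotProduct_transpose_mulVec, hK.eq,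
    mulVec_mulVec, mul_nonsing_inv K hKdet, one_mulVec, dotProduct_comm,
    ← dotProduct_transpose_mulVec, hL.eq]

theorem diagonal_mulVec_dotProduct_nonneg [DecidableEq ι]
    {d : ι → ℝ} (hd : ∀ i, 0 ≤ d i) (v : ι → ℝ) : 0 ≤ (diagonal d *ᵥ v) ⬝ᵥ v := by
  simpa [dotProduct_comm] using (PosSemidef.diagonal hd).dotProduct_mulVec_nonneg v

end Matrix

theorem gMat_transpose_mulVec {nG nE nN : ℕ} (z : BIdx nG nE nN → ℝ) :
    (gMat nG nE nN)ᵀ *ᵥ z = fun i => z (Sum.inl i) := by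
  ext i
  simp [gMat, mulVec, dotProduct, Fintype.sum_sum_type]

theorem bd3_mulVec_dotProduct {nG nE nN : ℕ} (A : Matrix (Fin nG) (Fin nG) ℝ)
    (B : Matrix (Fin nE) (Fin nE) ℝ) (D : Matrix (Fin nN) (Fin nN) ℝ)
    (z : BIdx nG nE nN → ℝ) :
    (bd3 A B D *ᵥ z) ⬝ᵥ z =
      (A *ᵥ fun i => z (Sum.inl i)) ⬝ᵥ (fun i => z (Sum.inl i)) +
        ((B *ᵥ fun j => z (Sum.inr (Sum.inl j))) ⬝ᵥ (fun j => z (Sum.inr (Sum.inl j))) +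
          (D *ᵥ fun k => z (Sum.inr (Sum.inr k))) ⬝ᵥ (fun k => z (Sum.inr (Sum.inr k)))) := by
  simp [bd3, fromBlocks_mulVec, dotProduct, Fintype.sum_sum_type, Function.comp_def]

theorem dotProduct_diagonal_mulVec_le_bd3 {nG nE nN : ℕ} {rG rD : Fin nG → ℝ}
    {rE : Fin nE → ℝ} {gD : Fin nN → ℝ} (hrG : ∀ i, 0 ≤ rG i) (hrE : ∀ j, 0 ≤ rE j)
    (hgD : ∀ k, 0 ≤ gD k) (z : BIdx nG nE nN → ℝ) :
    (diagonal rD *ᵥ fun i => z (Sum.inl i)) ⬝ᵥ (fun i => z (Sum.inl i)) ≤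
      (bd3 (diagonal fun i => rG i + rD i) (diagonal rE) (diagonal gD) *ᵥ z) ⬝ᵥ z := by
  rw [bd3_mulVec_dotProduct, ← diagonal_add, add_mulVec, add_dotProduct]
  have := diagonal_mulVec_dotProduct_nonneg hrG fun i => z (Sum.inl i)
  have := diagonal_mulVec_dotProduct_nonneg hrE fun j => z (Sum.inr (Sum.inl j))
  have := diagonal_mulVec_dotProduct_nonneg hgD fun k => z (Sum.inr (Sum.inr k))
  linarith

theorem closedLoop_storage_deriv_nonpos {nG nE nN : ℕ} {rG rD : Fin nG → ℝ}
    {rE : Fin nE → ℝ} {gD : Fin nN → ℝ} (hrG : ∀ i, 0 ≤ rG i) (hrE : ∀ j, 0 ≤ rE j)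
    (hgD : ∀ k, 0 ≤ gD k) {Q J : Matrix (BIdx nG nE nN) (BIdx nG nE nN) ℝ} (hJ : Jᵀ = -J)
    {kd : Fin nG → ℝ} (hkd : ∀ i, kd i ≠ 0) {L : Matrix (Fin nG) (Fin nG) ℝ} (hL : L.IsSymm)
    {r w : Matrix (Fin nG) (Fin nG) ℝ}
    (hpsd : ∀ v : Fin nG → ℝ, 0 ≤ v ⬝ᵥ ((diagonal rD + r) *ᵥ v))
    (x : BIdx nG nE nN → ℝ) (c : Fin nG → ℝ) :
    ((J - bd3 (diagonal fun i => rG i + rD i) (diagonal rE) (diagonal gD)) *ᵥ (Q *ᵥ x) +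
        gMat nG nE nN *ᵥ
          (-(r *ᵥ ((gMat nG nE nN)ᵀ *ᵥ (Q *ᵥ x))) - w⁻¹ *ᵥ (-(L *ᵥ c)))) ⬝ᵥ (Q *ᵥ x) +
      (-((diagonal kd * L) *ᵥ ((w⁻¹)ᵀ *ᵥ ((gMat nG nE nN)ᵀ *ᵥ (Q *ᵥ x))))) ⬝ᵥ
        ((diagonal kd)⁻¹ *ᵥ c) ≤ 0 := by
  have hKdet : IsUnit (diagonal kd).det := by
    rw [det_diagonal]
    exact (Finset.prod_ne_zero_iff.2 fun i _ => hkd i).isUnit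
  set z := Q *ᵥ x
  set y := (gMat nG nE nN)ᵀ *ᵥ z
  rw [dotProduct_portHamiltonian_flow hJ,
    neg_mul_mulVec_dotProduct_inv_mulVec (isSymm_diagonal kd) hKdet hL]
  have hcross : ((w⁻¹)ᵀ *ᵥ y) ⬝ᵥ (L *ᵥ c) = (w⁻¹ *ᵥ (L *ᵥ c)) ⬝ᵥ y := by
    rw [dotProduct_comm, dotProduct_transpose_mulVec, dotProduct_comm]
  have hinput : (-(r *ᵥ y) - w⁻¹ *ᵥ (-(L *ᵥ c))) ⬝ᵥ y =
      -(y ⬝ᵥ (r *ᵥ y)) + (w⁻¹ *ᵥ (L *ᵥ c)) ⬝ᵥ y := by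
    rw [mulVec_neg, sub_neg_eq_add, add_dotProduct, neg_dotProduct, dotProduct_comm (r *ᵥ y)]
  have hR : (diagonal rD *ᵥ y) ⬝ᵥ y ≤
      (bd3 (diagonal fun i => rG i + rD i) (diagonal rE) (diagonal gD) *ᵥ z) ⬝ᵥ z := by
    simpa only [y, gMat_transpose_mulVec] using dotProduct_diagonal_mulVec_le_bd3 hrG hrE hgD z
  have hsupply := hpsd y
  rw [add_mulVec, dotProduct_add, dotProduct_comm _ (diagonal rD *ᵥ y)] at hsupply
  linarith

theorem global_storage_nonincreasing_no_CPL_general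
    (nG nE nN : ℕ)
    (rG rD : Fin nG → ℝ) (rE : Fin nE → ℝ) (gD : Fin nN → ℝ)
    (hrG : ∀ i, 0 < rG i) (hrE : ∀ j, 0 < rE j)
    (hgD : ∀ k, 0 ≤ gD k)
    (Q : Matrix (BIdx nG nE nN) (BIdx nG nE nN) ℝ) (hQsymm : Q.IsSymm) (hQpd : Q.PosDef)
    (J : Matrix (BIdx nG nE nN) (BIdx nG nE nN) ℝ) (hJ : Jᵀ = -J)
    (kd : Fin nG → ℝ) (hkd : ∀ i, 0 < kd i)
    (L : Matrix (Fin nG) (Fin nG) ℝ) (hL : L.IsSymm)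
    (r w : Matrix (Fin nG) (Fin nG) ℝ)
    (xt : ℝ → (BIdx nG nE nN → ℝ)) (xc : ℝ → (Fin nG → ℝ))
    (hxdiff : ∀ t : ℝ, 0 ≤ t → HasDerivAt xt
      ((J - bd3 (Matrix.diagonal fun i => rG i + rD i) (Matrix.diagonal rE)
          (Matrix.diagonal gD)) *ᵥ (Q *ᵥ xt t) +
        gMat nG nE nN *ᵥ
          (-(r *ᵥ ((gMat nG nE nN)ᵀ *ᵥ (Q *ᵥ xt t))) - w⁻¹ *ᵥ (-(L *ᵥ xc t)))) t)
    (hxcdiff : ∀ t : ℝ, 0 ≤ t → HasDerivAt xc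
      (-((Matrix.diagonal kd * L) *ᵥ ((w⁻¹)ᵀ *ᵥ ((gMat nG nE nN)ᵀ *ᵥ (Q *ᵥ xt t))))) t)
    (hpsd : ∀ v : Fin nG → ℝ, 0 ≤ v ⬝ᵥ ((Matrix.diagonal rD + r) *ᵥ v)) :
    AntitoneOn (fun t => (1 / 2 : ℝ) * ((xt t) ⬝ᵥ (Q *ᵥ xt t)) +
        (1 / 2 : ℝ) * ((xc t) ⬝ᵥ ((Matrix.diagonal kd)⁻¹ *ᵥ xc t))) (Set.Ici 0) ∧
    (∃ M : ℝ, ∀ t : ℝ, 0 ≤ t → ‖xt t‖ ≤ M ∧ ‖xc t‖ ≤ M) := by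
  set H := fun t => (1 / 2 : ℝ) * ((xt t) ⬝ᵥ (Q *ᵥ xt t)) +
    (1 / 2 : ℝ) * ((xc t) ⬝ᵥ ((diagonal kd)⁻¹ *ᵥ xc t))
  have hKpd : (diagonal kd)⁻¹.PosDef := (PosDef.diagonal hkd).inv
  have hH : ∀ t, 0 ≤ t → HasDerivAt H _ t := fun t ht =>
    (hQsymm.hasDerivAt_half_dotProduct_mulVec (hxdiff t ht)).add
      ((isSymm_diagonal kd).inv.hasDerivAt_half_dotProduct_mulVec (hxcdiff t ht))
  have hanti : AntitoneOn H (Set.Ici 0) :=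
    antitoneOn_of_hasDerivWithinAt_nonpos (convex_Ici 0)
      (fun t ht => (hH t ht).continuousAt.continuousWithinAt)
      (fun t ht => (hH t (interior_subset ht)).hasDerivWithinAt)
      (fun t _ => closedLoop_storage_deriv_nonpos (fun i => (hrG i).le) (fun j => (hrE j).le)
        hgD hJ (fun i => (hkd i).ne') hL hpsd (xt t) (xc t))
  obtain ⟨MQ, hMQ⟩ := hQpd.exists_norm_le_of_dotProduct_mulVec_le (2 * H 0)
  obtain ⟨MK, hMK⟩ := hKpd.exists_norm_le_of_dotProduct_mulVec_le (2 * H 0)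
  refine ⟨hanti, max MQ MK, fun t ht => ?_⟩
  have hHt : (1 / 2 : ℝ) * (xt t ⬝ᵥ (Q *ᵥ xt t)) +
      (1 / 2 : ℝ) * (xc t ⬝ᵥ ((diagonal kd)⁻¹ *ᵥ xc t)) ≤ H 0 :=
    hanti Set.self_mem_Ici ht ht
  have hQt : 0 ≤ xt t ⬝ᵥ (Q *ᵥ xt t) := by
    simpa using hQpd.posSemidef.dotProduct_mulVec_nonneg (xt t)
  have hKt : 0 ≤ xc t ⬝ᵥ ((diagonal kd)⁻¹ *ᵥ xc t) := by
    simpa using hKpd.posSemidef.dotProduct_mulVec_nonneg (xc t)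
  exact ⟨(hMQ _ (by linarith)).trans (le_max_left _ _),
    (hMK _ (by linarith)).trans (le_max_right _ _)⟩

/-- **Corollary 1.** Without constant-power loads (`P = 0`) the dissipation
matrix is the constant `R̃ = blockdiag(R_G + R_D, R_E, G)`; if the symmetric part of
`R_D + r` is positive semidefinite, then—globally, with no domain restriction—the total
storage is nonincreasing on `[0,∞)` and every closed-loop trajectory remains bounded. -/
theorem global_storage_nonincreasing_no_CPL
    (nG nE nN : ℕ) (hnG : 0 < nG) (hnE : 0 < nE) (hnN : 0 < nN)
    (rG rD : Fin nG → ℝ) (rE : Fin nE → ℝ) (gD : Fin nN → ℝ)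
    (hrG : ∀ i, 0 < rG i) (hrD : ∀ i, 0 < rD i) (hrE : ∀ j, 0 < rE j)
    (hgD : ∀ k, 0 ≤ gD k)
    (Q : Matrix (BIdx nG nE nN) (BIdx nG nE nN) ℝ) (hQsymm : Q.IsSymm) (hQpd : Q.PosDef)
    (J : Matrix (BIdx nG nE nN) (BIdx nG nE nN) ℝ) (hJ : Jᵀ = -J)
    (kd : Fin nG → ℝ) (hkd : ∀ i, 0 < kd i)
    (L : Matrix (Fin nG) (Fin nG) ℝ) (hL : L.IsSymm)
    (r w : Matrix (Fin nG) (Fin nG) ℝ) (hw : IsUnit w.det)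
    (xt : ℝ → (BIdx nG nE nN → ℝ)) (xc : ℝ → (Fin nG → ℝ))
    (hxdiff : ∀ t : ℝ, 0 ≤ t → HasDerivAt xt
      ((J - bd3 (Matrix.diagonal fun i => rG i + rD i) (Matrix.diagonal rE)
          (Matrix.diagonal gD)) *ᵥ (Q *ᵥ xt t) +
        gMat nG nE nN *ᵥ
          (-(r *ᵥ ((gMat nG nE nN)ᵀ *ᵥ (Q *ᵥ xt t))) - w⁻¹ *ᵥ (-(L *ᵥ xc t)))) t)
    (hxcdiff : ∀ t : ℝ, 0 ≤ t → HasDerivAt xc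
      (-((Matrix.diagonal kd * L) *ᵥ ((w⁻¹)ᵀ *ᵥ ((gMat nG nE nN)ᵀ *ᵥ (Q *ᵥ xt t))))) t)
    (hpsd : ∀ v : Fin nG → ℝ, 0 ≤ v ⬝ᵥ ((Matrix.diagonal rD + r) *ᵥ v)) :
    AntitoneOn (fun t => (1 / 2 : ℝ) * ((xt t) ⬝ᵥ (Q *ᵥ xt t)) +
        (1 / 2 : ℝ) * ((xc t) ⬝ᵥ ((Matrix.diagonal kd)⁻¹ *ᵥ xc t))) (Set.Ici 0) ∧
    (∃ M : ℝ, ∀ t : ℝ, 0 ≤ t → ‖xt t‖ ≤ M ∧ ‖xc t‖ ≤ M) :=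
  global_storage_nonincreasing_no_CPL_general nG nE nN rG rD rE gD hrG hrE hgD Q hQsymm hQpd J hJ kd
    hkd L hL r w xt xc hxdiff hxcdiff hpsd
end
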